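/- The assignment I ↦ F_I is a bijection from the set of decorated nested chains of subsets of {1,…,n} to the set of Δ-faces of Δ^r_n. -/

import Mathlib

open Finset

noncomputable section

/-- `deltaP m k = m + (m-1) + ⋯ + (m-k+1)` (so `deltaP m 0 = 0`). -/
def deltaP (m k : ℕ) : ℝ := ∑ i ∈ Finset.range k, ((m : ℝ) - (i : ℝ))

/-- `Y = ℝ≥0 · μ_r ⊆ ℂ`. -/
def Yset (r : ℕ) : Set ℂ :=
  {x | ∃ t : ℝ, 0 ≤ t ∧ ∃ ω : ℂ, ω ^ r = 1 ∧ x = (t : ℂ) * ω}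

/-- The `r`-permutohedral complex `Δ^r_n ⊆ ℂ^n`. -/
def permComplex (r n : ℕ) : Set (Fin n → ℂ) :=
  {x | (∀ i, x i ∈ Yset r) ∧
    ∀ I : Finset (Fin n), ∑ i ∈ I, ‖x i‖ ≤ deltaP n I.card}

/-- The hyperplane `H_{(I,a)}` of a decorated subset `(I, a)` (only the values of the
decoration `a` on `I` matter). -/
def hyper {r n : ℕ} (ζ : ℂ) (I : Finset (Fin n)) (a : Fin n → ZMod r) :
    Set (Fin n → ℂ) :=
  {x | ∑ i ∈ I, ζ ^ (a i).val * x i = (deltaP n I.card : ℂ)}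
/-- A decorated nested chain `∅ ⊊ I_1 ⊊ ⋯ ⊊ I_k ⊆ [n]` (here `I j` for `j : Fin len`,
strictly increasing and all nonempty), with decoration `dec : I_k → ℤ/r` (the top set
`I_k` is `Finset.univ.sup I`). -/
structure DecChain (r n : ℕ) where
  len : ℕ
  I : Fin len → Finset (Fin n)
  nonempty : ∀ j, (I j).Nonempty
  mono : ∀ j j' : Fin len, j < j' → I j ⊂ I j'
  dec : ∀ i : Fin n, i ∈ Finset.univ.sup I → ZMod r

/-- The top set `I_k` of a chain (`∅` when `k = 0`). -/
def DecChain.top {r n : ℕ} (c : DecChain r n) : Finset (Fin n) :=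
  Finset.univ.sup c.I

theorem DecChain.mem_top {r n : ℕ} (c : DecChain r n) (j : Fin c.len) {i : Fin n}
    (h : i ∈ c.I j) : i ∈ c.top :=
  Finset.mem_of_subset (Finset.le_sup (Finset.mem_univ j)) h

/-- The Δ-face `F_I = Δ^r_n ∩ H_{(I_1,a|_{I_1})} ∩ ⋯ ∩ H_{(I_k,a|_{I_k})}` of a
decorated nested chain. -/
def Fface {r n : ℕ} (ζ : ℂ) (c : DecChain r n) : Set (Fin n → ℂ) :=
  {x | x ∈ permComplex r n ∧ ∀ j : Fin c.len,
    ∑ i ∈ (c.I j).attach, ζ ^ (c.dec i.1 (c.mem_top j i.2)).val * x i.1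
      = (deltaP n (c.I j).card : ℂ)}
/-- A Δ-face of `Δ^r_n`: a nonempty intersection of `Δ^r_n` with the hyperplanes of
finitely many distinct decorated subsets of `[n]`. -/
def IsDeltaFace (r n : ℕ) (ζ : ℂ) (F : Set (Fin n → ℂ)) : Prop :=
  F.Nonempty ∧ ∃ (k : ℕ) (I : Fin k → Finset (Fin n)) (a : Fin k → Fin n → ZMod r),
    (∀ j, (I j).Nonempty) ∧
    (∀ j j' : Fin k, j ≠ j' → ¬(I j = I j' ∧ ∀ i ∈ I j, a j i = a j' i)) ∧
    F = permComplex r n ∩ ⋂ j : Fin k, hyper ζ (I j) (a j)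

/-! ### Auxiliary material -/

lemma deltaP_closed (m k : ℕ) : deltaP m k = k * m - k * (k - 1) / 2 := by
  unfold deltaP
  rw [Finset.sum_sub_distrib, Finset.sum_const, Finset.card_range]
  have h := Finset.sum_range_id_mul_two k
  have h2 : (∑ i ∈ Finset.range k, (i : ℝ)) = k * (k - 1) / 2 := by
    have := congrArg (fun x : ℕ => (x : ℝ)) h
    push_cast at this
    rcases Nat.eq_zero_or_pos k with hk | hk
    · subst hk; simp
    · have : (∑ i ∈ Finset.range k, (i : ℝ)) * 2 = k * (k - 1) := by
        push_cast [Nat.cast_sub hk] at this ⊢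
        linarith [this]
      linarith
  rw [h2]
  simp [nsmul_eq_mul]

lemma deltaP_succ (m k : ℕ) : deltaP m (k + 1) = deltaP m k + (m - k) := by
  unfold deltaP; rw [Finset.sum_range_succ]

lemma zsum_re_eq {ι : Type*} (I : Finset ι) (z : ι → ℂ) (d : ℝ)
    (h1 : ∑ i ∈ I, ‖z i‖ ≤ d) (h2 : ∑ i ∈ I, z i = (d : ℂ)) :
    (∀ i ∈ I, z i = (‖z i‖ : ℂ)) ∧ ∑ i ∈ I, ‖z i‖ = d := by
  have hre : ∑ i ∈ I, (z i).re = d := by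
    have := congrArg Complex.re h2
    simpa [Complex.re_sum] using this
  have hle : ∀ i ∈ I, (z i).re ≤ ‖z i‖ := fun i _ => Complex.re_le_norm _
  have hsum : ∑ i ∈ I, ‖z i‖ = d := le_antisymm h1 (hre ▸ Finset.sum_le_sum hle)
  have heq : ∀ i ∈ I, (z i).re = ‖z i‖ := by
    have := (Finset.sum_eq_sum_iff_of_le hle).mp (by rw [hre, hsum])
    exact fun i hi => (this i hi)
  refine ⟨fun i hi => ?_, hsum⟩
  have h3 := heq i hi
  have him : (z i).im = 0 := by
    have := Complex.sq_norm (z i)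
    rw [Complex.normSq_apply, ← h3] at this
    nlinarith [this]
  apply Complex.ext <;> simp [h3, him]

lemma mem_hyper_iff' {r n : ℕ} {x : Fin n → ℂ} (hx : x ∈ permComplex r n)
    (I : Finset (Fin n)) (w : Fin n → ℂ) (hw : ∀ i, ‖w i‖ = 1) :
    ∑ i ∈ I, w i * x i = (deltaP n I.card : ℂ) ↔
      (∑ i ∈ I, ‖x i‖ = deltaP n I.card ∧
        ∀ i ∈ I, w i * x i = (‖x i‖ : ℂ)) := by
  have habs : ∀ i, ‖w i * x i‖ = ‖x i‖ := by
    intro i; rw [norm_mul, hw i, one_mul]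
  constructor
  · intro h
    have h1 : ∑ i ∈ I, ‖w i * x i‖ ≤ deltaP n I.card := by
      simpa [habs, hw] using hx.2 I
    obtain ⟨he, hs⟩ := zsum_re_eq I (fun i => w i * x i) _ h1 h
    exact ⟨by simpa [habs, hw] using hs, fun i hi => by simpa [habs i, hw] using he i hi⟩
  · rintro ⟨hs, he⟩
    calc ∑ i ∈ I, w i * x i = ∑ i ∈ I, (‖x i‖ : ℂ) := Finset.sum_congr rfl he
    _ = ((∑ i ∈ I, ‖x i‖ : ℝ) : ℂ) := by push_cast; rfl
    _ = _ := by rw [hs]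

lemma tight_pos {r n : ℕ} {x : Fin n → ℂ} (hx : x ∈ permComplex r n)
    {I : Finset (Fin n)} (ht : ∑ i ∈ I, ‖x i‖ = deltaP n I.card) :
    ∀ i ∈ I, 1 ≤ ‖x i‖ := by
  intro i hi
  have hcard : I.card ≤ n := by simpa using Finset.card_le_univ I
  obtain ⟨k, hk⟩ : ∃ k, I.card = k + 1 :=
    ⟨I.card - 1, (Nat.succ_pred_eq_of_pos (Finset.card_pos.mpr ⟨i, hi⟩)).symm⟩
  have herase : ∑ j ∈ I.erase i, ‖x j‖ ≤ deltaP n k := by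
    have := hx.2 (I.erase i)
    rwa [Finset.card_erase_of_mem hi, hk, Nat.succ_sub_one] at this
  have hsplit : ‖x i‖ + ∑ j ∈ I.erase i, ‖x j‖
      = deltaP n I.card := by
    rw [Finset.add_sum_erase _ (fun j => ‖x j‖) hi]; exact ht
  rw [hk, deltaP_succ] at hsplit
  have hkn : (k : ℝ) + 1 ≤ n := by exact_mod_cast hk ▸ hcard
  linarith [herase, hsplit]

lemma tight_chain {r n : ℕ} {x : Fin n → ℂ} (hx : x ∈ permComplex r n)
    {S T : Finset (Fin n)} (hS : ∑ i ∈ S, ‖x i‖ = deltaP n S.card)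
    (hT : ∑ i ∈ T, ‖x i‖ = deltaP n T.card) : S ⊆ T ∨ T ⊆ S := by
  by_contra hc
  push_neg at hc
  obtain ⟨h1, h2⟩ := hc
  set f := fun i => ‖x i‖
  have hsum : ∑ i ∈ S ∪ T, f i + ∑ i ∈ S ∩ T, f i = ∑ i ∈ S, f i + ∑ i ∈ T, f i :=
    Finset.sum_union_inter
  have hcard : (S ∪ T).card + (S ∩ T).card = S.card + T.card :=
    Finset.card_union_add_card_inter S T
  have hu := hx.2 (S ∪ T)
  have hi := hx.2 (S ∩ T)
  have hsP : (S ∩ T).card < S.card := Finset.card_lt_card ⟨Finset.inter_subset_left, by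
    intro hss; exact h1 fun a ha => (Finset.mem_inter.mp (hss (by exact ha))).2⟩
  have hsQ : (S ∩ T).card < T.card := Finset.card_lt_card ⟨Finset.inter_subset_right, by
    intro hss; exact h2 fun a ha => (Finset.mem_inter.mp (hss (by exact ha))).1⟩
  have hgt : deltaP n S.card + deltaP n T.card
      > deltaP n (S ∪ T).card + deltaP n (S ∩ T).card := by
    rw [deltaP_closed, deltaP_closed, deltaP_closed, deltaP_closed]
    have hcR : ((S ∪ T).card : ℝ) + ((S ∩ T).card : ℝ) = (S.card : ℝ) + (T.card : ℝ) := by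
      exact_mod_cast hcard
    have hp : ((S ∩ T).card : ℝ) + 1 ≤ S.card := by exact_mod_cast hsP
    have hq : ((S ∩ T).card : ℝ) + 1 ≤ T.card := by exact_mod_cast hsQ
    nlinarith [hp, hq, hcR]
  rw [hS, hT] at hsum
  linarith
noncomputable def tval {N : ℕ} : List (Finset (Fin N)) → ℕ → Fin N → ℝ
  | [], _, _ => 1/2
  | J :: L, m, i =>
    if i ∈ J then (m : ℝ) - ((J.card : ℝ) - 1)/2
    else tval (L.map (· \ J)) (m - J.card) i
termination_by L => L.length
decreasing_by simp

lemma tval_pos_aux {N : ℕ} (k : ℕ) : ∀ (L : List (Finset (Fin N))), L.length = k →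
    ∀ U, (∀ J ∈ L, J ⊆ U) → ∀ i, 0 < tval L U.card i := by
  induction k using Nat.strong_induction_on with
  | _ k IH =>
  intro L hk U hsub i
  match L, hk with
  | [], _ => rw [tval]; norm_num
  | J :: L', hk =>
    rw [tval]
    split
    · have hc : J.card ≤ U.card := Finset.card_le_card (hsub J (by simp))
      have : (J.card : ℝ) ≤ U.card := by exact_mod_cast hc
      linarith
    · have hm' : (U \ J).card = U.card - J.card :=
        Finset.card_sdiff_of_subset (hsub J (by simp))
      rw [← hm']
      refine IH L'.length (by simp at hk; omega) (L'.map (· \ J)) (by simp) (U \ J) ?_ i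
      intro K hK
      obtain ⟨K', hK', rfl⟩ := List.mem_map.mp hK
      exact Finset.sdiff_subset_sdiff (hsub K' (by simp [hK'])) le_rfl
lemma tval_nil {N : ℕ} (m : ℕ) (i : Fin N) : tval [] m i = 1/2 := by rw [tval]

lemma tval_cons_mem {N : ℕ} {J : Finset (Fin N)} (L : List (Finset (Fin N))) (m : ℕ)
    {i : Fin N} (h : i ∈ J) : tval (J :: L) m i = (m : ℝ) - ((J.card : ℝ) - 1)/2 := by
  rw [tval]; simp [h]

lemma tval_cons_not_mem {N : ℕ} {J : Finset (Fin N)} (L : List (Finset (Fin N))) (m : ℕ)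
    {i : Fin N} (h : i ∉ J) :
    tval (J :: L) m i = tval (L.map (· \ J)) (m - J.card) i := by
  rw [tval]; simp [h]

lemma tvalG_aux {N : ℕ} (k : ℕ) : ∀ (L : List (Finset (Fin N))), L.length = k →
    ∀ (U S : Finset (Fin N)), (∀ J ∈ L, J.Nonempty) → (∀ J ∈ L, J ⊆ U) →
    L.Pairwise (· ⊂ ·) → S ⊆ U →
    ∑ i ∈ S, tval L U.card i ≤ deltaP U.card S.card ∧
    (∑ i ∈ S, tval L U.card i = deltaP U.card S.card ↔ S = ∅ ∨ S ∈ L) := by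
  induction k using Nat.strong_induction_on with
  | _ k IH =>
  intro L hk U S hne hsub hpw hS
  match L, hk with
  | [], _ =>
    have hsum : ∑ i ∈ S, tval ([] : List (Finset (Fin N))) U.card i = S.card / 2 := by
      simp [tval_nil, Finset.sum_const, nsmul_eq_mul]
      ring
    rcases Finset.eq_empty_or_nonempty S with rfl | hSne
    · simp [deltaP]
    · have hs1 : 1 ≤ S.card := Finset.card_pos.mpr hSne
      have hsm : S.card ≤ U.card := Finset.card_le_card hS
      have hstrict : (S.card : ℝ) / 2 < deltaP U.card S.card := by
        rw [deltaP_closed]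
        have h1 : (1 : ℝ) ≤ S.card := by exact_mod_cast hs1
        have h2 : (S.card : ℝ) ≤ U.card := by exact_mod_cast hsm
        nlinarith
      rw [hsum]
      refine ⟨le_of_lt hstrict, ?_⟩
      constructor
      · intro h; exact absurd h (ne_of_lt hstrict)
      · rintro (rfl | h)
        · simp at hs1
        · simp at h
  | J :: L', hk =>
    -- notation
    have hJU : J ⊆ U := hsub J (by simp)
    have hhead : ∀ K ∈ L', J ⊂ K := (List.pairwise_cons.mp hpw).1
    have htail : L'.Pairwise (· ⊂ ·) := (List.pairwise_cons.mp hpw).2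
    set m := U.card with hm
    set c := J.card with hc
    set A := S ∩ J with hA
    set S' := S \ J with hS'
    set a := A.card with ha
    set b := S'.card with hb
    set L'' := L'.map (· \ J) with hL''
    set U' := U \ J with hU'
    have hm' : U'.card = m - c := Finset.card_sdiff_of_subset hJU
    have hcm : c ≤ m := Finset.card_le_card hJU
    -- hypotheses for IH
    have hne'' : ∀ K ∈ L'', K.Nonempty := by
      intro K hK
      obtain ⟨K', hK', rfl⟩ := List.mem_map.mp hK
      exact Finset.sdiff_nonempty.mpr (hhead K' hK').2
    have hsub'' : ∀ K ∈ L'', K ⊆ U' := by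
      intro K hK
      obtain ⟨K', hK', rfl⟩ := List.mem_map.mp hK
      exact Finset.sdiff_subset_sdiff (hsub K' (by simp [hK'])) le_rfl
    have hpw'' : L''.Pairwise (· ⊂ ·) := by
      rw [hL'', List.pairwise_map]
      refine htail.imp_of_mem ?_
      intro K₁ K₂ h1 h2 hlt
      have hJK₁ : J ⊆ K₁ := (hhead K₁ h1).subset
      constructor
      · exact Finset.sdiff_subset_sdiff hlt.subset le_rfl
      · intro hcon
        obtain ⟨y, hy2, hy1⟩ := Finset.exists_of_ssubset hlt
        have hyJ : y ∉ J := fun hyJ => hy1 (hJK₁ hyJ)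
        have : y ∈ K₂ \ J := Finset.mem_sdiff.mpr ⟨hy2, hyJ⟩
        have := hcon this
        exact hy1 (Finset.mem_sdiff.mp this).1
    have hS'U' : S' ⊆ U' := Finset.sdiff_subset_sdiff hS le_rfl
    have hlen : L''.length = L'.length := by simp [hL'']
    obtain ⟨hIH1, hIH2⟩ := IH L'.length (by simp at hk; omega) L'' hlen U' S' hne'' hsub'' hpw'' hS'U'
    rw [hm'] at hIH1 hIH2
    -- split the sum
    have hdisj : Disjoint S' A := by rw [hA, hS']; exact Finset.disjoint_sdiff_inter S J
    have hSeq : S' ∪ A = S := by rw [hA, hS']; exact Finset.sdiff_union_inter S J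
    set v : ℝ := (m : ℝ) - ((c : ℝ) - 1)/2 with hv
    have hsplit : ∑ i ∈ S, tval (J :: L') m i
        = (∑ i ∈ S', tval L'' (m - c) i) + a * v := by
      rw [← hSeq, Finset.sum_union hdisj]
      congr 1
      · apply Finset.sum_congr rfl
        intro i hi
        exact tval_cons_not_mem L' m (Finset.mem_sdiff.mp hi).2
      · rw [Finset.sum_congr rfl (fun i hi => tval_cons_mem L' m (Finset.mem_inter.mp hi).2)]
        rw [Finset.sum_const, nsmul_eq_mul]
    set T' := ∑ i ∈ S', tval L'' (m - c) i with hT'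
    have hcardS : S.card = a + b := by
      rw [← hSeq, Finset.card_union_of_disjoint hdisj]; omega
    have hac : a ≤ c := Finset.card_le_card (hA ▸ Finset.inter_subset_right)
    -- cast facts
    have hmR : (c : ℝ) ≤ m := by exact_mod_cast hcm
    have hacR : (a : ℝ) ≤ c := by exact_mod_cast hac
    have hmcR : ((m - c : ℕ) : ℝ) = (m : ℝ) - c := by
      rw [Nat.cast_sub hcm]
    have hgapEq : deltaP m (a + b)
        = a * v + deltaP (m - c) b + ((c : ℝ) - a) * (2 * b + a) / 2 := by
      rw [deltaP_closed, deltaP_closed, hmcR, hv]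
      push_cast
      ring
    have hineq : ∑ i ∈ S, tval (J :: L') m i ≤ deltaP m S.card := by
      rw [hsplit, hcardS, hgapEq]
      have h1 : (0:ℝ) ≤ (c : ℝ) - a := by linarith
      have h2 : (0:ℝ) ≤ 2 * (b:ℝ) + a := by positivity
      have hgap : (0:ℝ) ≤ ((c : ℝ) - a) * (2 * b + a) / 2 :=
        div_nonneg (mul_nonneg h1 h2) (by norm_num)
      linarith [hIH1]
    refine ⟨hineq, ?_⟩
    rw [hsplit, hcardS, hgapEq]
    constructor
    · intro heq
      have h1 : (0:ℝ) ≤ (c : ℝ) - a := by linarith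
      have h2 : (0:ℝ) ≤ 2 * (b:ℝ) + a := by positivity
      have hgap : (0:ℝ) ≤ ((c : ℝ) - a) * (2 * b + a) / 2 :=
        div_nonneg (mul_nonneg h1 h2) (by norm_num)
      have hT'eq : T' = deltaP (m - c) b := le_antisymm hIH1 (by linarith)
      have hzero : ((c : ℝ) - a) * (2 * b + a) = 0 := by linarith
      -- convert hzero to nat statement
      have hcase : a = c ∨ (a = 0 ∧ b = 0) := by
        have haR : (0:ℝ) ≤ (a:ℝ) := Nat.cast_nonneg a
        have hbR : (0:ℝ) ≤ (b:ℝ) := Nat.cast_nonneg b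
        rcases mul_eq_zero.mp hzero with h | h
        · left
          have hra : (a : ℝ) = (c:ℝ) := by linarith
          exact_mod_cast hra
        · right
          constructor
          · exact_mod_cast (by linarith : (a:ℝ) = 0)
          · exact_mod_cast (by linarith : (b:ℝ) = 0)
      rcases hcase with hca | ⟨ha0, hb0⟩
      · -- J ⊆ S
        have hAJ : A = J := Finset.eq_of_subset_of_card_le (hA ▸ Finset.inter_subset_right)
          (le_of_eq (by rw [← ha, ← hc, hca]))
        rcases (hIH2.mp hT'eq) with hS'emp | hS'mem
        · right
          have : S = J := by rw [← hSeq, hS'emp, hAJ]; simp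
          simp [this]
        · obtain ⟨K, hK, hKeq⟩ := List.mem_map.mp hS'mem
          right
          have hJK : J ⊆ K := (hhead K hK).subset
          have : S = K := by
            rw [← hSeq, hAJ, ← hKeq, Finset.union_comm, Finset.union_sdiff_of_subset hJK]
          simp [this, hK]
      · left
        have : S.card = 0 := by omega
        exact Finset.card_eq_zero.mp this
    · rintro (rfl | hmem)
      · have hA0 : A = ∅ := by simp [hA]
        have hS'0 : S' = ∅ := by simp [hS']
        have ha0 : a = 0 := by simp [ha, hA0]
        have hb0 : b = 0 := by simp [hb, hS'0]
        have hT'0 : T' = 0 := by simp [hT', hS'0]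
        rw [hT'0, ha0, hb0]
        simp [deltaP]
      · rcases List.mem_cons.mp hmem with rfl | hK
        · -- S = J
          have hAJ : A = S := by rw [hA]; simp
          have hS'0 : S' = ∅ := by rw [hS']; simp
          have ha0 : a = c := by rw [ha, hAJ]
          have hb0 : b = 0 := by simp [hb, hS'0]
          have hT'0 : T' = 0 := by simp [hT', hS'0]
          rw [hT'0, ha0, hb0]
          simp [deltaP, hv]
        · -- S ∈ L'
          have hJS : J ⊆ S := (hhead S hK).subset
          have hAJ : A = J := by rw [hA, Finset.inter_eq_right.mpr hJS]
          have haC : a = c := by rw [ha, hAJ]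
          have hS'mem : S' ∈ L'' := by
            rw [hL'', hS']
            exact List.mem_map.mpr ⟨S, hK, rfl⟩
          have hT'eq : T' = deltaP (m - c) b := hIH2.mpr (Or.inr hS'mem)
          rw [hT'eq, haC]
          ring

section Zeta

variable {r n : ℕ} (ζ : ℂ)

lemma abs_zeta (hζ : IsPrimitiveRoot ζ r) (hr : 2 ≤ r) : ‖ζ‖ = 1 := by
  have h : ‖ζ‖ ^ r = 1 := by
    rw [← norm_pow, hζ.pow_eq_one, norm_one]
  rcases lt_trichotomy (‖ζ‖) 1 with hlt | heq | hgt
  · have := pow_lt_one₀ (norm_nonneg ζ) hlt (by omega : r ≠ 0)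
    rw [h] at this; exact absurd this (lt_irrefl 1)
  · exact heq
  · have := one_lt_pow₀ hgt (by omega : r ≠ 0)
    rw [h] at this; exact absurd this (lt_irrefl 1)

lemma abs_zeta_pow (hζ : IsPrimitiveRoot ζ r) (hr : 2 ≤ r) (s : ℕ) :
    ‖ζ ^ s‖ = 1 := by
  rw [norm_pow, abs_zeta ζ hζ hr, one_pow]

lemma zeta_val_inj (hζ : IsPrimitiveRoot ζ r) (hr : 2 ≤ r) {a b : ZMod r}
    (h : ζ ^ a.val = ζ ^ b.val) : a = b := by
  haveI : NeZero r := ⟨by omega⟩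
  exact ZMod.val_injective r (hζ.pow_inj (ZMod.val_lt a) (ZMod.val_lt b) h)

/-- The coefficient function of a decorated chain. -/
def wfun (c : DecChain r n) : Fin n → ℂ :=
  fun i => if h : i ∈ c.top then ζ ^ ((c.dec i h).val) else 1

lemma abs_wfun (hζ : IsPrimitiveRoot ζ r) (hr : 2 ≤ r) (c : DecChain r n) (i : Fin n) :
    ‖wfun ζ c i‖ = 1 := by
  unfold wfun
  split
  · exact abs_zeta_pow ζ hζ hr _
  · simp

lemma wfun_ne_zero (hζ : IsPrimitiveRoot ζ r) (hr : 2 ≤ r) (c : DecChain r n) (i : Fin n) :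
    wfun ζ c i ≠ 0 := by
  intro h
  have := abs_wfun ζ hζ hr c i
  rw [h] at this; simp at this

lemma mem_Fface_iff (c : DecChain r n) (x : Fin n → ℂ) :
    x ∈ Fface ζ c ↔ x ∈ permComplex r n ∧ ∀ j : Fin c.len,
      ∑ i ∈ c.I j, wfun ζ c i * x i = (deltaP n (c.I j).card : ℂ) := by
  unfold Fface
  constructor
  · rintro ⟨h1, h2⟩
    refine ⟨h1, fun j => ?_⟩
    rw [← Finset.sum_attach (c.I j) (fun i => wfun ζ c i * x i), ← h2 j]
    apply Finset.sum_congr rfl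
    intro i _
    have hm : i.1 ∈ c.top := c.mem_top j i.2
    simp [wfun, hm]
  · rintro ⟨h1, h2⟩
    refine ⟨h1, fun j => ?_⟩
    rw [← h2 j, ← Finset.sum_attach (c.I j) (fun i => wfun ζ c i * x i)]
    apply Finset.sum_congr rfl
    intro i _
    have hm : i.1 ∈ c.top := c.mem_top j i.2
    simp [wfun, hm]

end Zeta

section Point

variable {r n : ℕ} (ζ : ℂ)

/-- The list of sets of a decorated chain. -/
def chainL (c : DecChain r n) : List (Finset (Fin n)) := List.ofFn c.I

lemma mem_chainL {c : DecChain r n} {K : Finset (Fin n)} :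
    K ∈ chainL c ↔ ∃ j, c.I j = K := by
  simp [chainL, List.mem_ofFn, Set.mem_range]

lemma pairwise_chainL (c : DecChain r n) : (chainL c).Pairwise (· ⊂ ·) :=
  List.pairwise_ofFn.mpr (fun i j h => c.mono i j h)

lemma nonempty_chainL (c : DecChain r n) : ∀ K ∈ chainL c, K.Nonempty := by
  intro K hK
  obtain ⟨j, rfl⟩ := mem_chainL.mp hK
  exact c.nonempty j

/-- The radial part of the canonical point of a chain. -/
def tpt (c : DecChain r n) : Fin n → ℝ := tval (chainL c) n

lemma card_univ_fin : (Finset.univ : Finset (Fin n)).card = n := by simp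

lemma tptG (c : DecChain r n) (S : Finset (Fin n)) :
    ∑ i ∈ S, tpt c i ≤ deltaP n S.card ∧
    (∑ i ∈ S, tpt c i = deltaP n S.card ↔ S = ∅ ∨ S ∈ chainL c) := by
  have := tvalG_aux (N := n) (chainL c).length (chainL c) rfl Finset.univ S
    (nonempty_chainL c) (fun J _ => Finset.subset_univ J) (pairwise_chainL c)
    (Finset.subset_univ S)
  rwa [card_univ_fin] at this

lemma tpt_pos (c : DecChain r n) (i : Fin n) : 0 < tpt c i := by
  have := tval_pos_aux (N := n) (chainL c).length (chainL c) rfl Finset.univ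
    (fun J _ => Finset.subset_univ J) i
  rwa [card_univ_fin] at this

/-- The canonical point of a chain. -/
def xpt (c : DecChain r n) : Fin n → ℂ :=
  fun i => (tpt c i : ℂ) * (wfun ζ c i)⁻¹

lemma wfun_pow_r (hζ : IsPrimitiveRoot ζ r) (c : DecChain r n) (i : Fin n) : (wfun ζ c i) ^ r = 1 := by
  unfold wfun
  split
  · rw [← pow_mul, mul_comm, pow_mul, hζ.pow_eq_one, one_pow]
  · rw [one_pow]

lemma abs_xpt (hζ : IsPrimitiveRoot ζ r) (hr : 2 ≤ r) (c : DecChain r n) (i : Fin n) :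
    ‖xpt ζ c i‖ = tpt c i := by
  unfold xpt
  rw [norm_mul, norm_inv, abs_wfun ζ hζ hr, Complex.norm_real, Real.norm_eq_abs,
    abs_of_pos (tpt_pos c i)]
  simp

lemma wfun_mul_xpt (hζ : IsPrimitiveRoot ζ r) (hr : 2 ≤ r) (c : DecChain r n) (i : Fin n) :
    wfun ζ c i * xpt ζ c i = (tpt c i : ℂ) := by
  unfold xpt
  rw [mul_comm, mul_assoc, inv_mul_cancel₀ (wfun_ne_zero ζ hζ hr c i), mul_one]

lemma xpt_mem_perm (hζ : IsPrimitiveRoot ζ r) (hr : 2 ≤ r) (c : DecChain r n) : xpt ζ c ∈ permComplex r n := by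
  constructor
  · intro i
    refine ⟨tpt c i, (tpt_pos c i).le, (wfun ζ c i)⁻¹, ?_, rfl⟩
    rw [inv_pow, wfun_pow_r ζ hζ c i, inv_one]
  · intro S
    calc ∑ i ∈ S, ‖xpt ζ c i‖ = ∑ i ∈ S, tpt c i :=
          Finset.sum_congr rfl (fun i _ => abs_xpt ζ hζ hr c i)
    _ ≤ deltaP n S.card := (tptG c S).1

lemma xpt_tight_iff (hζ : IsPrimitiveRoot ζ r) (hr : 2 ≤ r) (c : DecChain r n) (S : Finset (Fin n)) :
    ∑ i ∈ S, ‖xpt ζ c i‖ = deltaP n S.card ↔ S = ∅ ∨ S ∈ chainL c := by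
  rw [Finset.sum_congr rfl (fun i _ => abs_xpt ζ hζ hr c i)]
  exact (tptG c S).2

lemma xpt_mem_Fface (hζ : IsPrimitiveRoot ζ r) (hr : 2 ≤ r) (c : DecChain r n) : xpt ζ c ∈ Fface ζ c := by
  rw [mem_Fface_iff]
  refine ⟨xpt_mem_perm ζ hζ hr c, fun j => ?_⟩
  calc ∑ i ∈ c.I j, wfun ζ c i * xpt ζ c i = ∑ i ∈ c.I j, ((tpt c i : ℝ) : ℂ) :=
        Finset.sum_congr rfl (fun i _ => wfun_mul_xpt ζ hζ hr c i)
  _ = ((∑ i ∈ c.I j, tpt c i : ℝ) : ℂ) := by push_cast; rfl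
  _ = (deltaP n (c.I j).card : ℂ) := by
      rw [(tptG c (c.I j)).2.mpr (Or.inr (mem_chainL.mpr ⟨j, rfl⟩))]

end Point

/-- Proposition 7.19: `I ↦ F_I` is a bijection from decorated nested
chains of subsets of `[n]` to the Δ-faces of `Δ^r_n`. -/
theorem stmt9 (r n : ℕ) (hr : 2 ≤ r) (hn : 1 ≤ n) (ζ : ℂ) (hζ : IsPrimitiveRoot ζ r) :
    Set.BijOn (fun c : DecChain r n => Fface ζ c) Set.univ
      {F | IsDeltaFace r n ζ F} := by
  refine ⟨?_, ?_, ?_⟩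
  · -- MapsTo
    intro c _
    have hsum : ∀ (x : Fin n → ℂ) (j : Fin c.len),
        ∑ i ∈ c.I j, ζ ^ ((if h : i ∈ c.top then c.dec i h else 0).val) * x i
          = ∑ i ∈ c.I j, wfun ζ c i * x i := by
      intro x j
      apply Finset.sum_congr rfl
      intro i hi
      have hm : i ∈ c.top := c.mem_top j hi
      rw [dif_pos hm]
      simp [wfun, hm]
    refine ⟨⟨xpt ζ c, xpt_mem_Fface ζ hζ hr c⟩, c.len, c.I,
      (fun j i => if h : i ∈ c.top then c.dec i h else 0), c.nonempty, ?_, ?_⟩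
    · intro j j' hjj hcon
      rcases lt_or_gt_of_ne hjj with h | h
      · exact (c.mono j j' h).ne hcon.1
      · exact (c.mono j' j h).ne hcon.1.symm
    · ext x
      rw [Set.mem_inter_iff, Set.mem_iInter, mem_Fface_iff]
      simp only [hyper, Set.mem_setOf_eq]
      constructor
      · rintro ⟨h1, h2⟩
        exact ⟨h1, fun j => by rw [hsum x j]; exact h2 j⟩
      · rintro ⟨h1, h2⟩
        exact ⟨h1, fun j => by rw [← hsum x j]; exact h2 j⟩
  · -- InjOn
    intro c₁ _ c₂ _ heq
    simp only at heq
    have hx12 : xpt ζ c₁ ∈ Fface ζ c₂ := heq ▸ xpt_mem_Fface ζ hζ hr c₁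
    have hx21 : xpt ζ c₂ ∈ Fface ζ c₁ := heq.symm ▸ xpt_mem_Fface ζ hζ hr c₂
    have key : ∀ cA cB : DecChain r n, xpt ζ cA ∈ Fface ζ cB →
        ∀ K ∈ chainL cB, K ∈ chainL cA := by
      intro cA cB hmem K hK
      obtain ⟨j, rfl⟩ := mem_chainL.mp hK
      rw [mem_Fface_iff] at hmem
      have htight := ((mem_hyper_iff' hmem.1 (cB.I j) (wfun ζ cB)
        (abs_wfun ζ hζ hr cB)).mp (hmem.2 j)).1
      rcases (xpt_tight_iff ζ hζ hr cA (cB.I j)).mp htight with h0 | h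
      · exact absurd (cB.nonempty j) (by simp [h0])
      · exact h
    have hmemiff : ∀ K, K ∈ chainL c₁ ↔ K ∈ chainL c₂ :=
      fun K => ⟨key c₂ c₁ hx21 K, key c₁ c₂ hx12 K⟩
    have hnd1 : (chainL c₁).Nodup := (pairwise_chainL c₁).imp (fun h => h.ne)
    have hnd2 : (chainL c₂).Nodup := (pairwise_chainL c₂).imp (fun h => h.ne)
    haveI : IsAntisymm (Finset (Fin n)) (· ⊂ ·) :=
      ⟨fun A B h1 h2 => absurd (h1.trans h2) (ssubset_irrefl A)⟩
    have hlists : chainL c₁ = chainL c₂ :=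
      List.Perm.eq_of_pairwise (fun A B _ _ h1 h2 => absurd (h1.trans h2) (ssubset_irrefl A))
        (pairwise_chainL c₁) (pairwise_chainL c₂) ((List.perm_ext_iff_of_nodup hnd1 hnd2).mpr hmemiff)
    obtain ⟨k₁, I₁, ne₁, mo₁, d₁⟩ := c₁
    obtain ⟨k₂, I₂, ne₂, mo₂, d₂⟩ := c₂
    have hk : k₁ = k₂ := by
      have := congrArg List.length hlists
      simpa [chainL] using this
    subst hk
    have hI : I₁ = I₂ := List.ofFn_injective (by simpa [chainL] using hlists)
    subst hI
    have hd : d₁ = d₂ := by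
      funext i hi
      obtain ⟨j, -, hij⟩ := Finset.mem_sup.mp hi
      set cA : DecChain r n := ⟨k₁, I₁, ne₁, mo₁, d₁⟩ with hcA
      set cB : DecChain r n := ⟨k₁, I₁, ne₂, mo₂, d₂⟩ with hcB
      rw [mem_Fface_iff] at hx12
      have hphase := ((mem_hyper_iff' hx12.1 (cB.I j) (wfun ζ cB)
        (abs_wfun ζ hζ hr cB)).mp (hx12.2 j)).2 i hij
      have h1 : wfun ζ cA i * xpt ζ cA i = (tpt cA i : ℂ) := wfun_mul_xpt ζ hζ hr cA i
      rw [abs_xpt ζ hζ hr cA] at hphase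
      have hxne : xpt ζ cA i ≠ 0 := by
        intro h0
        have h2' := abs_xpt ζ hζ hr cA i
        rw [h0, norm_zero] at h2'
        linarith [tpt_pos cA i]
      have hw : wfun ζ cA i = wfun ζ cB i :=
        mul_right_cancel₀ hxne (h1.trans hphase.symm)
      have hiA : i ∈ cA.top := hi
      have hiB : i ∈ cB.top := hi
      rw [wfun, wfun, dif_pos hiA, dif_pos hiB] at hw
      exact zeta_val_inj ζ hζ hr hw
    subst hd
    rfl
  · -- SurjOn
    intro F hF
    obtain ⟨⟨x, hxF⟩, k, I, a, hne, hdist, hFeq⟩ := hF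
    subst hFeq
    have hxperm : x ∈ permComplex r n := hxF.1
    have hxh : ∀ j, ∑ i ∈ I j, ζ ^ (a j i).val * x i = (deltaP n (I j).card : ℂ) :=
      fun j => Set.mem_iInter.mp hxF.2 j
    have hj : ∀ j, _ := fun j => (mem_hyper_iff' hxperm (I j)
      (fun i => ζ ^ (a j i).val) (fun i => abs_zeta_pow ζ hζ hr _)).mp (hxh j)
    have htight : ∀ j, ∑ i ∈ I j, ‖x i‖ = deltaP n (I j).card :=
      fun j => (hj j).1
    have hphase : ∀ j, ∀ i ∈ I j, ζ ^ (a j i).val * x i = (‖x i‖ : ℂ) :=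
      fun j => (hj j).2
    have hxne : ∀ j i, i ∈ I j → x i ≠ 0 := by
      intro j i hi h0
      have := tight_pos hxperm (htight j) i hi
      rw [h0] at this; simp at this; linarith
    have hacons : ∀ j j' i, i ∈ I j → i ∈ I j' → a j i = a j' i := by
      intro j j' i h h'
      have h3 : ζ ^ (a j i).val = ζ ^ (a j' i).val :=
        mul_right_cancel₀ (hxne j i h) ((hphase j i h).trans (hphase j' i h').symm)
      exact zeta_val_inj ζ hζ hr h3
    have hIinj : Function.Injective I := by
      intro j j' hjj
      by_contra hne'
      exact hdist j j' hne' ⟨hjj, fun i hi => hacons j j' i hi (hjj ▸ hi)⟩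
    have hcomp : ∀ j j', I j ⊆ I j' ∨ I j' ⊆ I j :=
      fun j j' => tight_chain hxperm (htight j) (htight j')
    set keyf : Fin k → ℕ := fun j => (I j).card with hkeyf
    set σ : Equiv.Perm (Fin k) := Tuple.sort keyf with hσ
    have hmono : ∀ j j' : Fin k, j < j' → I (σ j) ⊂ I (σ j') := by
      intro j j' hlt
      have hkle : keyf (σ j) ≤ keyf (σ j') := Tuple.monotone_sort keyf (le_of_lt hlt)
      have hIne : I (σ j) ≠ I (σ j') :=
        fun h => absurd (σ.injective (hIinj h)) (ne_of_lt hlt)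
      rcases hcomp (σ j) (σ j') with h | h
      · exact Finset.ssubset_iff_subset_ne.mpr ⟨h, hIne⟩
      · exact absurd (Finset.eq_of_subset_of_card_le h hkle).symm hIne
    refine ⟨⟨k, fun j => I (σ j), fun j => hne (σ j), hmono,
      fun i hi => a (σ (Finset.mem_sup.mp hi).choose) i⟩, Set.mem_univ _, ?_⟩
    set c : DecChain r n := ⟨k, fun j => I (σ j), fun j => hne (σ j), hmono,
      fun i hi => a (σ (Finset.mem_sup.mp hi).choose) i⟩ with hcdef
    have hwf : ∀ (j : Fin k), ∀ i ∈ I j, wfun ζ c i = ζ ^ (a j i).val := by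
      intro j i hi
      have hi' : i ∈ c.I (σ.symm j) := by
        show i ∈ I (σ (σ.symm j))
        rw [Equiv.apply_symm_apply]
        exact hi
      have hi'' : i ∈ c.top := c.mem_top (σ.symm j) hi'
      rw [wfun, dif_pos hi'']
      have hdec : c.dec i hi'' = a (σ (Finset.mem_sup.mp hi'').choose) i := rfl
      rw [hdec, hacons (σ (Finset.mem_sup.mp hi'').choose) j i
        (Finset.mem_sup.mp hi'').choose_spec.2 hi]
    show Fface ζ c = _
    ext y
    rw [Set.mem_inter_iff, Set.mem_iInter, mem_Fface_iff]
    simp only [hyper, Set.mem_setOf_eq]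
    constructor
    · rintro ⟨h1, h2⟩
      refine ⟨h1, fun j => ?_⟩
      have := h2 (σ.symm j)
      rw [show c.I (σ.symm j) = I j from congrArg I (Equiv.apply_symm_apply σ j)] at this
      rw [← this]
      exact (Finset.sum_congr rfl (fun i hi => by rw [hwf j i hi])).symm
    · rintro ⟨h1, h2⟩
      refine ⟨h1, fun j => ?_⟩
      have := h2 (σ j)
      rw [← this]
      exact Finset.sum_congr rfl (fun i hi => by rw [hwf (σ j) i hi])
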